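/- For the ALS sequence, f(v_{k+1}) − f(v_k) = −(1/(2‖b‖²)) Σ_{μ=0}^{d−1} ‖Π_{k,μ} r_{k,μ}‖² ≤ 0 where r_{k,μ} = b − v_{k,μ}; hence (f(v_k))_k is nonincreasing and bounded below by −1/2, so it converges to some α ∈ ℝ, and moreover ‖v_{k+1} − v_k‖² ≤ 2d‖b‖² Σ_{μ=0}^{d−1}(f(v_{k,μ}) − f(v_{k,μ+1})), so ‖v_{k+1} − v_k‖ → 0. -/

import Mathlib

/-- The objective function `f(v) = (1/‖b‖²)(½⟨v,v⟩ − ⟨b,v⟩)` on a Euclidean space. -/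
noncomputable def fobj {E : Type*} [NormedAddCommGroup E] [InnerProductSpace ℝ E]
    (b v : E) : ℝ :=
  (1 / ‖b‖ ^ 2) * ((1 / 2) * (inner ℝ v v : ℝ) - (inner ℝ b v : ℝ))


open Filter Topology

/-!
Each micro step moves the iterate by an orthogonal projection `p = Π r` of the residual
`r = b − v`, and since `⟨p, r⟩ = ‖p‖²` the quadratic `f` drops by exactly `‖p‖²/(2‖b‖²)`.
Summing over a sweep gives the energy identity, so `f(v_k)` is nonincreasing; it is bounded
below because `‖b‖² f(v) = ½‖v − b‖² − ½‖b‖²`, hence it converges. The sweep increment is the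
sum of the `d` projected residuals, so by Cauchy–Schwarz its square is at most `d` times the sum
of their squares, i.e. at most `2d‖b‖²` times the decrease of `f` over the sweep, which tends
to `0`.
-/

theorem norm_sum_sq_le_card_mul_sum_norm_sq {E ι : Type*} [SeminormedAddCommGroup E]
    (s : Finset ι) (f : ι → E) : ‖∑ i ∈ s, f i‖ ^ 2 ≤ s.card * ∑ i ∈ s, ‖f i‖ ^ 2 :=
  (pow_le_pow_left₀ (norm_nonneg _) (norm_sum_le s f) 2).trans (sq_sum_le_card_mul_sum_sq ..)

section

variable {E : Type*} [NormedAddCommGroup E] [InnerProductSpace ℝ E]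

theorem LinearMap.IsSymmetric.inner_map_self_eq_norm_sq {T : E →ₗ[ℝ] E} (hT : T.IsSymmetric)
    (hidem : ∀ x, T (T x) = T x) (x : E) : inner ℝ (T x) x = ‖T x‖ ^ 2 := by
  rw [← real_inner_self_eq_norm_sq, hT x (T x), hidem, real_inner_comm]

theorem fobj_eq (b v : E) : fobj b v = (‖v - b‖ ^ 2 - ‖b‖ ^ 2) / (2 * ‖b‖ ^ 2) := by
  rw [fobj, norm_sub_sq_real, real_inner_self_eq_norm_sq, real_inner_comm]
  ring

theorem neg_half_le_fobj (b v : E) : -(1 / 2) ≤ fobj b v := by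
  rcases eq_or_ne b 0 with rfl | hb
  · simp [fobj]
  have hb2 : 0 < 2 * ‖b‖ ^ 2 := by positivity
  rw [fobj_eq, le_div_iff₀ hb2]
  nlinarith [sq_nonneg ‖v - b‖]

theorem fobj_add_map_sub {T : E →ₗ[ℝ] E} (hT : T.IsSymmetric) (hidem : ∀ x, T (T x) = T x)
    (b w : E) : fobj b (w + T (b - w)) = fobj b w - ‖T (b - w)‖ ^ 2 / (2 * ‖b‖ ^ 2) := by
  have hproj := hT.inner_map_self_eq_norm_sq hidem (b - w)
  have hdrop : (1 / 2) * inner ℝ (w + T (b - w)) (w + T (b - w)) - inner ℝ b (w + T (b - w))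
      = (1 / 2) * inner ℝ w w - inner ℝ b w - (1 / 2) * ‖T (b - w)‖ ^ 2 := by
    simp only [inner_add_left, inner_add_right, inner_sub_right, real_inner_self_eq_norm_sq,
      real_inner_comm w (T _), real_inner_comm b (T _)] at hproj ⊢
    linear_combination (-1) * hproj
  rw [fobj, fobj, hdrop]
  ring

theorem sum_fobj_sub_fobj_succ_of_proj_steps {b : E} {d : ℕ} {w : ℕ → E}
    {T : ℕ → E →ₗ[ℝ] E} (hT : ∀ μ, (T μ).IsSymmetric) (hidem : ∀ μ x, T μ (T μ x) = T μ x)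
    (hw : ∀ μ < d, w (μ + 1) = w μ + T μ (b - w μ)) :
    ∑ μ ∈ Finset.range d, (fobj b (w μ) - fobj b (w (μ + 1)))
      = 1 / (2 * ‖b‖ ^ 2) * ∑ μ ∈ Finset.range d, ‖T μ (b - w μ)‖ ^ 2 := by
  rw [Finset.mul_sum]
  refine Finset.sum_congr rfl fun μ hμ => ?_
  rw [hw μ (Finset.mem_range.1 hμ), fobj_add_map_sub (hT μ) (hidem μ)]
  ring

theorem fobj_sub_fobj_of_proj_steps {b : E} {d : ℕ} {w : ℕ → E}
    {T : ℕ → E →ₗ[ℝ] E} (hT : ∀ μ, (T μ).IsSymmetric) (hidem : ∀ μ x, T μ (T μ x) = T μ x)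
    (hw : ∀ μ < d, w (μ + 1) = w μ + T μ (b - w μ)) :
    fobj b (w d) - fobj b (w 0)
      = -(1 / (2 * ‖b‖ ^ 2)) * ∑ μ ∈ Finset.range d, ‖T μ (b - w μ)‖ ^ 2 := by
  rw [neg_mul, ← sum_fobj_sub_fobj_succ_of_proj_steps hT hidem hw, Finset.sum_range_sub',
    neg_sub]

theorem norm_sub_sq_le_of_proj_steps {b : E} (hb : b ≠ 0) {d : ℕ} {w : ℕ → E}
    {T : ℕ → E →ₗ[ℝ] E} (hT : ∀ μ, (T μ).IsSymmetric) (hidem : ∀ μ x, T μ (T μ x) = T μ x)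
    (hw : ∀ μ < d, w (μ + 1) = w μ + T μ (b - w μ)) :
    ‖w d - w 0‖ ^ 2
      ≤ 2 * d * ‖b‖ ^ 2 * ∑ μ ∈ Finset.range d, (fobj b (w μ) - fobj b (w (μ + 1))) := by
  have hb2 : ‖b‖ ^ 2 ≠ 0 := by positivity
  rw [sum_fobj_sub_fobj_succ_of_proj_steps hT hidem hw, ← Finset.sum_range_sub w]
  calc ‖∑ μ ∈ Finset.range d, (w (μ + 1) - w μ)‖ ^ 2
      ≤ d * ∑ μ ∈ Finset.range d, ‖w (μ + 1) - w μ‖ ^ 2 := by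
        simpa using norm_sum_sq_le_card_mul_sum_norm_sq (Finset.range d) fun μ => w (μ + 1) - w μ
    _ = d * ∑ μ ∈ Finset.range d, ‖T μ (b - w μ)‖ ^ 2 := by
        congr 1
        refine Finset.sum_congr rfl fun μ hμ => ?_
        rw [hw μ (Finset.mem_range.1 hμ), add_sub_cancel_left]
    _ = 2 * d * ‖b‖ ^ 2 * (1 / (2 * ‖b‖ ^ 2) * ∑ μ ∈ Finset.range d, ‖T μ (b - w μ)‖ ^ 2) := by
        field_simp

end

theorem tendsto_zero_of_sq_le_mul_sub_succ {u a : ℕ → ℝ} {α : ℝ} (C : ℝ)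
    (ha : Tendsto a atTop (𝓝 α)) (h : ∀ k, u k ^ 2 ≤ C * (a k - a (k + 1))) :
    Tendsto u atTop (𝓝 0) := by
  have hgap : Tendsto (fun k => C * (a k - a (k + 1))) atTop (𝓝 0) := by
    simpa using (ha.sub (ha.comp (tendsto_add_atTop_nat 1))).const_mul C
  have hsq : Tendsto (fun k => u k ^ 2) atTop (𝓝 0) :=
    squeeze_zero (fun k => sq_nonneg _) h hgap
  exact (tendsto_zero_iff_abs_tendsto_zero u).2 (by simpa [Real.sqrt_sq_eq_abs, Function.comp_def] using hsq.sqrt)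

/-- Along the ALS micro-iterates `v k μ` (with `v k d = v (k+1) 0` and
`v k (μ+1) = v k μ + Π_{k,μ}(b − v k μ)` for orthogonal projections `Π_{k,μ}`):
the function values decrease by `(1/(2‖b‖²)) Σ_μ ‖Π_{k,μ} r_{k,μ}‖²`, are bounded below
by `−1/2`, hence converge; moreover `‖v_{k+1} − v_k‖² ≤ 2d‖b‖² Σ_μ (f(v_{k,μ}) − f(v_{k,μ+1}))`
and `‖v_{k+1} − v_k‖ → 0`. -/
theorem stmt19 {E : Type*} [NormedAddCommGroup E] [InnerProductSpace ℝ E]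
    (d : ℕ) (b : E) (hb : b ≠ 0)
    (v : ℕ → ℕ → E) (hlink : ∀ k, v k d = v (k + 1) 0)
    (P : ℕ → ℕ → (E →ₗ[ℝ] E))
    (hsym : ∀ k μ, ∀ x y : E, (inner ℝ (P k μ x) y : ℝ) = (inner ℝ x (P k μ y) : ℝ))
    (hidem : ∀ k μ, ∀ x : E, P k μ (P k μ x) = P k μ x)
    (hrec : ∀ k, ∀ μ < d, v k (μ + 1) = v k μ + P k μ (b - v k μ)) :
    (∀ k, fobj b (v (k + 1) 0) - fobj b (v k 0)
        = -(1 / (2 * ‖b‖ ^ 2)) * ∑ μ ∈ Finset.range d, ‖P k μ (b - v k μ)‖ ^ 2) ∧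
      (∀ k, fobj b (v (k + 1) 0) ≤ fobj b (v k 0)) ∧
      (∀ k, -(1 / 2) ≤ fobj b (v k 0)) ∧
      (∃ α : ℝ, Tendsto (fun k => fobj b (v k 0)) atTop (𝓝 α)) ∧
      (∀ k, ‖v (k + 1) 0 - v k 0‖ ^ 2
        ≤ 2 * d * ‖b‖ ^ 2 * ∑ μ ∈ Finset.range d, (fobj b (v k μ) - fobj b (v k (μ + 1)))) ∧
      Tendsto (fun k => ‖v (k + 1) 0 - v k 0‖) atTop (𝓝 0) := by
  have hsweep k : fobj b (v (k + 1) 0) - fobj b (v k 0)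
      = -(1 / (2 * ‖b‖ ^ 2)) * ∑ μ ∈ Finset.range d, ‖P k μ (b - v k μ)‖ ^ 2 :=
    hlink k ▸ fobj_sub_fobj_of_proj_steps (hsym k) (hidem k) (hrec k)
  have hdecr k : fobj b (v (k + 1) 0) ≤ fobj b (v k 0) := by
    rw [← sub_nonpos, hsweep k]
    exact mul_nonpos_of_nonpos_of_nonneg (neg_nonpos.2 (by positivity))
      (Finset.sum_nonneg fun μ _ => sq_nonneg _)
  have hconv : ∃ α : ℝ, Tendsto (fun k => fobj b (v k 0)) atTop (𝓝 α) :=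
    ⟨_, tendsto_atTop_ciInf (antitone_nat_of_succ_le hdecr)
      ⟨-(1 / 2), by rintro _ ⟨k, rfl⟩; exact neg_half_le_fobj b _⟩⟩
  have hincr k : ‖v (k + 1) 0 - v k 0‖ ^ 2
      ≤ 2 * d * ‖b‖ ^ 2 * ∑ μ ∈ Finset.range d, (fobj b (v k μ) - fobj b (v k (μ + 1))) :=
    hlink k ▸ norm_sub_sq_le_of_proj_steps hb (hsym k) (hidem k) (hrec k)
  obtain ⟨α, hα⟩ := hconv
  refine ⟨hsweep, hdecr, fun k => neg_half_le_fobj b _, ⟨α, hα⟩, hincr, ?_⟩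
  refine tendsto_zero_of_sq_le_mul_sub_succ (2 * d * ‖b‖ ^ 2) hα fun k => (hincr k).trans_eq ?_
  rw [Finset.sum_range_sub', hlink]
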